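/- arXiv:math-ph/0609017 — 3 statements merged into one kernel-verified Lean document; each statement's English description precedes it below -/
import Mathlib

section
/- Let L, w, Γ be as above and define G_z := (√z⁻¹ e^{-√z x}, -(-L+z)⁻¹ w) ∈ L²(0,∞) ⊕ 𝔥 for Re√z > 0. Then for all admissible z, w in the resolvent set, Γ(z) - Γ(ζ) = (z - ζ)·⟨G_{ζ*}, G_z⟩, where the inner product is taken in L²(0,∞) ⊕ 𝔥. -/
open Complex MeasureTheory Set

/-- `Γ(z) = -(1/√z + ⟨w, (-L+z)⁻¹ w⟩)` with `√z = z^{1/2}` the branch of positive real part. -/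
noncomputable def Gam (𝔥 : Type*) [NormedAddCommGroup 𝔥] [InnerProductSpace ℂ 𝔥]
    (L : Module.End ℂ 𝔥) (w : 𝔥) (z : ℂ) : ℂ :=
  -((z ^ (1/2 : ℂ))⁻¹ + (inner ℂ w ((Ring.inverse (z • (1 : Module.End ℂ 𝔥) - L)) w) : ℂ))

/-!
Both `Γ` and `⟨G_{ζ*}, G_z⟩` split into a scalar part and an `𝔥` part, and the identity holds
for each part separately. Writing `s = √z`, `t = √ζ`, the scalar part is
`∫₀^∞ e^{-(t+s)x} dx / (t s) = 1 / (t s (t + s))`, and `(z - ζ) = (s - t)(s + t)` turns it into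
`1/t - 1/s`. The `𝔥` part is the first resolvent identity
`R(ζ) - R(z) = (z - ζ) R(ζ) R(z)` for `R(z) = (z - L)⁻¹`, combined with `R(ζ̄)* = R(ζ)`,
which holds because `L` is symmetric.
-/

lemma mem_slitPlane_of_not_im_eq_zero_and_re_nonpos {z : ℂ} (hz : ¬(z.im = 0 ∧ z.re ≤ 0)) :
    z ∈ slitPlane := by
  rw [mem_slitPlane_iff]
  by_contra! h
  exact hz ⟨h.2, h.1⟩

lemma re_cpow_one_half_pos {z : ℂ} (hz : z ∈ slitPlane) : 0 < (z ^ (1/2 : ℂ)).re := by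
  have hnorm : 0 < ‖z‖ + z.re := by
    rcases mem_slitPlane_iff.mp hz with hre | him
    · linarith [norm_nonneg z]
    · linarith [neg_abs_le z.re, abs_re_lt_norm.mpr him]
  rw [one_div, cpow_inv_two_re]
  positivity

lemma cpow_one_half_mul_self (z : ℂ) : z ^ (1/2 : ℂ) * z ^ (1/2 : ℂ) = z := by
  rw [← sq, one_div, cpow_ofNat_inv_pow]

lemma conj_cpow_one_half_conj {z : ℂ} (hz : z ∈ slitPlane) :
    starRingEnd ℂ (starRingEnd ℂ z ^ (1/2 : ℂ)) = z ^ (1/2 : ℂ) := by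
  rw [conj_cpow _ _ (slitPlane_arg_ne_pi hz), conj_conj, map_div₀, map_one, map_ofNat]

lemma integral_Ioi_cexp_neg_mul {c : ℂ} (hc : 0 < c.re) :
    ∫ x : ℝ in Ioi 0, exp (-(c * x)) = c⁻¹ := by
  have := integral_exp_mul_complex_Ioi (a := -c) (by simpa using hc) 0
  simp only [ofReal_zero, mul_zero, exp_zero, neg_mul] at this
  rw [this]
  ring

lemma integral_Ioi_conj_cexp_div_mul_cexp_div {a b : ℂ} (ha : 0 < a.re) (hb : 0 < b.re) :
    ∫ x : ℝ in Ioi 0, starRingEnd ℂ (exp (-(a * x)) / a) * (exp (-(b * x)) / b) =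
      (starRingEnd ℂ a * b * (starRingEnd ℂ a + b))⁻¹ := by
  have hpointwise : ∀ x : ℝ, starRingEnd ℂ (exp (-(a * x)) / a) * (exp (-(b * x)) / b) =
      (starRingEnd ℂ a * b)⁻¹ * exp (-((starRingEnd ℂ a + b) * x)) := by
    intro x
    rw [map_div₀, ← exp_conj, map_neg, map_mul, conj_ofReal, add_mul, neg_add, exp_add]
    field_simp
  simp_rw [hpointwise]
  rw [integral_const_mul, integral_Ioi_cexp_neg_mul (by rw [add_re, conj_re]; linarith), ← mul_inv]

lemma sub_mul_integral_Ioi_conj_cexp_div_mul_cexp_div_cpow {z ζ : ℂ} (hz : z ∈ slitPlane)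
    (hζ : ζ ∈ slitPlane) :
    (z - ζ) * ∫ x : ℝ in Ioi 0,
      starRingEnd ℂ (exp (-(starRingEnd ℂ ζ ^ (1/2 : ℂ) * x)) / starRingEnd ℂ ζ ^ (1/2 : ℂ)) *
        (exp (-(z ^ (1/2 : ℂ) * x)) / z ^ (1/2 : ℂ)) =
      (ζ ^ (1/2 : ℂ))⁻¹ - (z ^ (1/2 : ℂ))⁻¹ := by
  have hs := re_cpow_one_half_pos hz
  have ht := re_cpow_one_half_pos hζ
  have htc : 0 < (starRingEnd ℂ ζ ^ (1/2 : ℂ)).re := by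
    rwa [← conj_re, conj_cpow_one_half_conj hζ]
  rw [integral_Ioi_conj_cexp_div_mul_cexp_div htc hs, conj_cpow_one_half_conj hζ]
  have hs0 : z ^ (1/2 : ℂ) ≠ 0 := fun h => hs.ne' (by rw [h, zero_re])
  have ht0 : ζ ^ (1/2 : ℂ) ≠ 0 := fun h => ht.ne' (by rw [h, zero_re])
  have hst0 : ζ ^ (1/2 : ℂ) + z ^ (1/2 : ℂ) ≠ 0 := fun h => by
    have := congrArg re h
    rw [add_re, zero_re] at this
    linarith
  field_simp
  linear_combination cpow_one_half_mul_self ζ - cpow_one_half_mul_self z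

lemma Ring.inverse_smul_one_sub_sub_inverse_smul_one_sub {R A : Type*} [CommRing R] [Ring A]
    [Algebra R A] {a : A} {r s : R} (hr : IsUnit (r • (1 : A) - a))
    (hs : IsUnit (s • (1 : A) - a)) :
    Ring.inverse (r • (1 : A) - a) - Ring.inverse (s • (1 : A) - a) =
      (s - r) • (Ring.inverse (r • (1 : A) - a) * Ring.inverse (s • (1 : A) - a)) := by
  rw [Ring.inverse_sub_inverse (iff_of_true hr hs), sub_sub_sub_cancel_right, ← sub_smul,
    mul_smul_comm, mul_one, smul_mul_assoc]

section InnerProduct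

variable {𝔥 : Type*} [NormedAddCommGroup 𝔥] [InnerProductSpace ℂ 𝔥]

lemma inner_inverse_apply_left_of_inner_apply_left {A B : Module.End ℂ 𝔥} (hA : IsUnit A)
    (hB : IsUnit B) (hAB : ∀ x y, inner ℂ (A x) y = inner ℂ x (B y)) (u v : 𝔥) :
    inner ℂ (Ring.inverse A u) v = inner ℂ u (Ring.inverse B v) := by
  have apply_inverse_apply {T : Module.End ℂ 𝔥} (hT : IsUnit T) (x : 𝔥) :
      T (Ring.inverse T x) = x := by
    rw [← Module.End.mul_apply, Ring.mul_inverse_cancel _ hT, Module.End.one_apply]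
  calc inner ℂ (Ring.inverse A u) v = inner ℂ (Ring.inverse A u) (B (Ring.inverse B v)) := by
        rw [apply_inverse_apply hB]
    _ = inner ℂ u (Ring.inverse B v) := by rw [← hAB, apply_inverse_apply hA]

lemma inner_inverse_conj_smul_one_sub_apply {L : Module.End ℂ 𝔥} (hL : L.IsSymmetric) {ζ : ℂ}
    (hζ : IsUnit (ζ • (1 : Module.End ℂ 𝔥) - L))
    (hζc : IsUnit (starRingEnd ℂ ζ • (1 : Module.End ℂ 𝔥) - L)) (u v : 𝔥) :
    inner ℂ (Ring.inverse (starRingEnd ℂ ζ • (1 : Module.End ℂ 𝔥) - L) u) v =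
      inner ℂ u (Ring.inverse (ζ • (1 : Module.End ℂ 𝔥) - L) v) := by
  refine inner_inverse_apply_left_of_inner_apply_left hζc hζ (fun x y => ?_) u v
  simp only [LinearMap.sub_apply, LinearMap.smul_apply, Module.End.one_apply, inner_sub_left,
    inner_sub_right, inner_smul_left, inner_smul_right, conj_conj, hL x y]

lemma sub_mul_inner_inverse_conj_smul_one_sub_apply {L : Module.End ℂ 𝔥} (hL : L.IsSymmetric)
    {z ζ : ℂ} (hz : IsUnit (z • (1 : Module.End ℂ 𝔥) - L))
    (hζ : IsUnit (ζ • (1 : Module.End ℂ 𝔥) - L))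
    (hζc : IsUnit (starRingEnd ℂ ζ • (1 : Module.End ℂ 𝔥) - L)) (u v : 𝔥) :
    (z - ζ) * inner ℂ (Ring.inverse (starRingEnd ℂ ζ • (1 : Module.End ℂ 𝔥) - L) u)
        (Ring.inverse (z • (1 : Module.End ℂ 𝔥) - L) v) =
      inner ℂ u (Ring.inverse (ζ • (1 : Module.End ℂ 𝔥) - L) v) -
        inner ℂ u (Ring.inverse (z • (1 : Module.End ℂ 𝔥) - L) v) := by
  rw [inner_inverse_conj_smul_one_sub_apply hL hζ hζc, ← inner_smul_right, ← inner_sub_right,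
    ← LinearMap.sub_apply, Ring.inverse_smul_one_sub_sub_inverse_smul_one_sub hζ hz,
    LinearMap.smul_apply, Module.End.mul_apply]

end InnerProduct

theorem stmt6_general (𝔥 : Type*) [NormedAddCommGroup 𝔥] [InnerProductSpace ℂ 𝔥]
    (L : Module.End ℂ 𝔥) (hL : L.IsSymmetric) (w : 𝔥)
    (z ζ : ℂ) (hz : ¬(z.im = 0 ∧ z.re ≤ 0)) (hζ : ¬(ζ.im = 0 ∧ ζ.re ≤ 0))
    (hzu : IsUnit (z • (1 : Module.End ℂ 𝔥) - L))
    (hζu : IsUnit (ζ • (1 : Module.End ℂ 𝔥) - L))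
    (hζcu : IsUnit ((starRingEnd ℂ ζ) • (1 : Module.End ℂ 𝔥) - L)) :
    Gam 𝔥 L w z - Gam 𝔥 L w ζ = (z - ζ) *
      ((∫ x in Ioi (0:ℝ),
          (starRingEnd ℂ (Complex.exp (-(((starRingEnd ℂ ζ) ^ (1/2 : ℂ)) * x)) /
            ((starRingEnd ℂ ζ) ^ (1/2 : ℂ)))) *
          (Complex.exp (-((z ^ (1/2 : ℂ)) * x)) / (z ^ (1/2 : ℂ)))) +
        (inner ℂ (-(Ring.inverse ((starRingEnd ℂ ζ) • (1 : Module.End ℂ 𝔥) - L) w))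
          (-(Ring.inverse (z • (1 : Module.End ℂ 𝔥) - L) w)) : ℂ)) := by
  rw [Gam, Gam, mul_add, inner_neg_neg,
    sub_mul_integral_Ioi_conj_cexp_div_mul_cexp_div_cpow
      (mem_slitPlane_of_not_im_eq_zero_and_re_nonpos hz)
      (mem_slitPlane_of_not_im_eq_zero_and_re_nonpos hζ),
    sub_mul_inner_inverse_conj_smul_one_sub_apply hL hzu hζu hζcu]
  ring

/-- With `G_z = (x ↦ e^{-√z x}/√z, -(-L+z)⁻¹w) ∈ L²(0,∞) ⊕ 𝔥`, for admissible `z, ζ`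
one has `Γ(z) - Γ(ζ) = (z-ζ)⟨G_{ζ*}, G_z⟩`, where the inner product of the pair is the
`L²(0,∞)` inner product of the first components plus the `𝔥` inner product of the second ones. -/
theorem stmt6 (𝔥 : Type*) [NormedAddCommGroup 𝔥] [InnerProductSpace ℂ 𝔥]
    [FiniteDimensional ℂ 𝔥] (L : Module.End ℂ 𝔥) (hL : L.IsSymmetric) (w : 𝔥)
    (z ζ : ℂ) (hz : ¬(z.im = 0 ∧ z.re ≤ 0)) (hζ : ¬(ζ.im = 0 ∧ ζ.re ≤ 0))
    (hzu : IsUnit (z • (1 : Module.End ℂ 𝔥) - L))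
    (hζu : IsUnit (ζ • (1 : Module.End ℂ 𝔥) - L))
    (hζcu : IsUnit ((starRingEnd ℂ ζ) • (1 : Module.End ℂ 𝔥) - L)) :
    Gam 𝔥 L w z - Gam 𝔥 L w ζ = (z - ζ) *
      ((∫ x in Ioi (0:ℝ),
          (starRingEnd ℂ (Complex.exp (-(((starRingEnd ℂ ζ) ^ (1/2 : ℂ)) * x)) /
            ((starRingEnd ℂ ζ) ^ (1/2 : ℂ)))) *
          (Complex.exp (-((z ^ (1/2 : ℂ)) * x)) / (z ^ (1/2 : ℂ)))) +
        (inner ℂ (-(Ring.inverse ((starRingEnd ℂ ζ) • (1 : Module.End ℂ 𝔥) - L) w))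
          (-(Ring.inverse (z • (1 : Module.End ℂ 𝔥) - L) w)) : ℂ)) :=
  stmt6_general 𝔥 L hL w z ζ hz hζ hzu hζu hζcu
end

section
/- Let A₀ and τ be as in the generalized Lamb model and R(z) := (-A₀+z)⁻¹ + (θ+Γ(z))⁻¹ G_z ⊗ G_{z*}. If the operator family R(z) satisfies the relation Γ(z)-Γ(ζ) = (z-ζ)⟨G_{ζ*},G_z⟩ and G_ζ - G_z = (z-ζ)(-A₀+z)⁻¹G_z, then R satisfies the first resolvent identity R(ζ) - R(z) = (z-ζ) R(ζ) R(z). -/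
/-!
Write `P_z = G_z ⊗ G_{z̄}`, so that `R(z) = R₀(z) + (θ + Γ z)⁻¹ P_z`. Multiplied by `z - ζ`, each of
the four terms of `R(ζ) R(z)` becomes a difference: the resolvent identity handles `R₀(ζ) R₀(z)`,
the relation for `G` (at `z, ζ`, and at `z̄, ζ̄` through the adjoint) turns `R₀(ζ) P_z` and
`P_ζ R₀(z)` into differences of rank-one operators, and the relation for `Γ` turns `P_ζ P_z` into
`(Γ z - Γ ζ) G_ζ ⊗ G_{z̄}`. All cross terms `G_ζ ⊗ G_{z̄}` cancel.
-/

open Complex ContinuousLinearMap InnerProductSpace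

theorem resolvent_identity_of_perturbation {𝕜 A : Type*} [Field 𝕜] [Ring A] [Algebra 𝕜 A]
    {w a b : 𝕜} (ha : a ≠ 0) (hb : b ≠ 0) {S T P Q C : A}
    (hST : w • (S * T) = S - T) (hSP : w • (S * P) = C - P) (hQT : w • (Q * T) = Q - C)
    (hQP : w • (Q * P) = (a - b) • C) :
    (S + b⁻¹ • Q) - (T + a⁻¹ • P) = w • ((S + b⁻¹ • Q) * (T + a⁻¹ • P)) := by
  have hcoeff : b⁻¹ * a⁻¹ * (a - b) = b⁻¹ - a⁻¹ := by field_simp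
  calc (S + b⁻¹ • Q) - (T + a⁻¹ • P)
      = w • (S * T) + a⁻¹ • w • (S * P) + b⁻¹ • w • (Q * T) + (b⁻¹ * a⁻¹) • w • (Q * P) := by
        rw [hST, hSP, hQT, hQP, smul_smul _ (a - b), hcoeff]; module
    _ = w • ((S + b⁻¹ • Q) * (T + a⁻¹ • P)) := by
        simp only [add_mul, mul_add, smul_mul_assoc, mul_smul_comm, smul_add]
        module

theorem smul_apply_eq_sub_of_resolvent_identity {𝕜 E : Type*} [RCLike 𝕜] [NormedAddCommGroup E]
    [NormedSpace 𝕜 E] {T : 𝕜 → E →L[𝕜] E} {g : 𝕜 → E} {z ζ : 𝕜}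
    (hT : T ζ - T z = (z - ζ) • (T ζ * T z))
    (hzζ : g ζ - g z = (z - ζ) • T z (g z)) (hζz : g z - g ζ = (ζ - z) • T ζ (g ζ)) :
    (z - ζ) • T ζ (g z) = g ζ - g z := by
  have hζ : (z - ζ) • T ζ (g ζ) = g ζ - g z := by
    rw [← neg_sub ζ z, neg_smul, ← hζz, neg_sub]
  have hdiff : T ζ (g z) - T z (g z) = T ζ (g ζ) - T ζ (g z) :=
    calc T ζ (g z) - T z (g z) = (T ζ - T z) (g z) := rfl
      _ = T ζ ((z - ζ) • T z (g z)) := by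
        rw [hT, smul_apply, mul_apply_eq_comp, map_smul]
      _ = T ζ (g ζ) - T ζ (g z) := by rw [← hzζ, map_sub]
  -- `hdiff` reads `2 T ζ (g z) = T z (g z) + T ζ (g ζ)`; scale by `(z - ζ) / 2`.
  linear_combination (norm := module)
    (2⁻¹ * (z - ζ) : 𝕜) • hdiff + (2⁻¹ : 𝕜) • hζ - (2⁻¹ : 𝕜) • hzζ

/-- Abstract Krein-type resolvent formula: if `R(z) = R₀(z) + (θ+Γ(z))⁻¹ G_z ⊗ G_{z*}`,
where `R₀` satisfies the first resolvent identity, `Γ(z)-Γ(ζ) = (z-ζ)⟨G_{ζ*},G_z⟩`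
and `G_ζ - G_z = (z-ζ)R₀(z)G_z`, then `R` also satisfies the first resolvent identity
`R(ζ) - R(z) = (z-ζ) R(ζ) R(z)`. -/
theorem stmt7 (H : Type*) [NormedAddCommGroup H] [InnerProductSpace ℂ H] [CompleteSpace H]
    (D : Set ℂ) (R0 : ℂ → H →L[ℂ] H) (G : ℂ → H) (Γ : ℂ → ℂ) (θ : ℝ)
    (hD : ∀ z ∈ D, starRingEnd ℂ z ∈ D)
    (hres : ∀ z ∈ D, ∀ ζ ∈ D, R0 ζ - R0 z = (z - ζ) • ((R0 ζ).comp (R0 z)))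
    (hadj : ∀ z ∈ D, ContinuousLinearMap.adjoint (R0 z) = R0 (starRingEnd ℂ z))
    (hG : ∀ z ∈ D, ∀ ζ ∈ D, G ζ - G z = (z - ζ) • (R0 z) (G z))
    (hΓ : ∀ z ∈ D, ∀ ζ ∈ D, Γ z - Γ ζ = (z - ζ) * (inner ℂ (G (starRingEnd ℂ ζ)) (G z) : ℂ))
    (hθ : ∀ z ∈ D, (θ : ℂ) + Γ z ≠ 0)
    (R : ℂ → H →L[ℂ] H)
    (hRdef : ∀ z ∈ D, R z = R0 z +
      ((θ : ℂ) + Γ z)⁻¹ • ((innerSL ℂ (G (starRingEnd ℂ z))).smulRight (G z))) :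
    ∀ z ∈ D, ∀ ζ ∈ D, R ζ - R z = (z - ζ) • ((R ζ).comp (R z)) := by
  intro z hz ζ hζ
  have hRG : (z - ζ) • R0 ζ (G z) = G ζ - G z :=
    smul_apply_eq_sub_of_resolvent_identity (hres z hz ζ hζ) (hG z hz ζ hζ) (hG ζ hζ z hz)
  have hRG' := smul_apply_eq_sub_of_resolvent_identity (hres _ (hD ζ hζ) _ (hD z hz))
    (hG _ (hD ζ hζ) _ (hD z hz)) (hG _ (hD z hz) _ (hD ζ hζ))
  rw [hRdef z hz, hRdef ζ hζ, ← rankOne_def, ← rankOne_def]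
  refine resolvent_identity_of_perturbation (hθ z hz) (hθ ζ hζ)
    (C := rankOne ℂ (G ζ) (G (starRingEnd ℂ z))) (hres z hz ζ hζ).symm ?_ ?_ ?_
  · rw [mul_def, comp_rankOne, ← smul_apply, ← map_smul, hRG, map_sub, sub_apply]
  · rw [mul_def, rankOne_comp, hadj z hz, ← map_sub, ← neg_sub (G _), ← hRG', ← neg_smul,
      neg_sub, ← map_sub, map_smulₛₗ, conj_conj]
  · rw [mul_def, rankOne_comp_rankOne, smul_smul, add_sub_add_left_eq_sub, hΓ z hz ζ hζ]
end

section
/- Define polynomials recursively by p₁(z) = θz + 1 and p_k(z) = z²p_{k-1}(z) - ⟨w, L^{k-2}w⟩ z for k ≥ 2, where L is self-adjoint on n-dimensional 𝔥 with distinct eigenvalues λ₁,…,λₙ and w ∈ 𝔥. Let p(z) = p_{n+1}(z) - ∑_{i,j=1}^n λᵢⁿ (V⁻¹)_{ij} p_j(z), with V the Vandermonde matrix of the λᵢ. Then p(z) = (θz+1)·det(z² - L) - z·∑_{j=1}^n (∑_{k=1}^j a_{j-k} ⟨w, L^{k-1}w⟩) z^{2(n-j)}, where a₀ = 1 and a_j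 = (-1)^j ∑_{i₁<…<i_j} λ_{i₁}⋯λ_{i_j} are the signed elementary symmetric functions of the eigenvalues. -/
/-!
The eigenvalues `λᵢ` are the roots of `χ = ∏ᵢ (X - λᵢ)`, monic of degree `n`, so the row
`(λᵢⁿ)ᵢ` is `-(χ.coeff j)ⱼ` times `V`; multiplying by `V⁻¹` collapses the double sum to
`∑_{j ≤ n} χ.coeff j · p_{j+1}(z)`. Unrolling the recursion,
`p_{j+1}(z) = z^{2j}(θz+1) - z ∑_{m<j} c_m z^{2(j-1-m)}`: the first terms add up to
`(θz+1) χ(z²)`, the second ones, regrouped by the power of `z`, to the convolution of the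
coefficients of `χ` (the `a_k`, by Vieta) with the `c_m`.
-/

open Finset Matrix

/-- The recursively defined polynomials: `p₁(z) = θz+1`,
`p_{k+1}(z) = z²p_k(z) - c_{k-1} z` where `c_k = ⟨w, L^k w⟩` (index shifted so that
`pseq θ c k` is the paper's `p_{k+1}`). -/
noncomputable def pseq (θ : ℝ) (c : ℕ → ℂ) : ℕ → ℂ → ℂ
  | 0 => fun z => θ * z + 1
  | (k + 1) => fun z => z ^ 2 * pseq θ c k z - c k * z

open Polynomial

section CharPoly

variable {R : Type*} [CommRing R] {n : ℕ}

theorem prod_X_sub_C_coeff_sub (v : Fin n → R) {k : ℕ} (hk : k ≤ n) :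
    (∏ i, (X - C (v i))).coeff (n - k) =
      (-1) ^ k * ∑ t ∈ powersetCard k univ, ∏ i ∈ t, v i := by
  have h := Multiset.prod_X_sub_C_coeff (univ.val.map v) (k := n - k) (by simp)
  rw [Multiset.map_map, Multiset.card_map, card_val, card_univ, Fintype.card_fin,
    Nat.sub_sub_self hk, esymm_map_val] at h
  exact h

theorem natDegree_prod_X_sub_C [Nontrivial R] (v : Fin n → R) :
    (∏ i, (X - C (v i))).natDegree = n := by
  rw [natDegree_prod_of_monic _ _ fun i _ => monic_X_sub_C (v i)]
  simp

theorem vandermonde_mulVec_neg_coeff {P : R[X]} (hP : P.Monic) (hdeg : P.natDegree = n)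
    {v : Fin n → R} (hroot : ∀ i, P.IsRoot (v i)) :
    vandermonde v *ᵥ (fun j => -P.coeff j) = fun i => v i ^ n := by
  funext i
  have h := hroot i
  rw [IsRoot, eval_eq_sum_range, hdeg, sum_range_succ, ← hdeg, hP.coeff_natDegree, hdeg,
    ← Fin.sum_univ_eq_sum_range (fun j => P.coeff j * v i ^ j)] at h
  simp only [mulVec, dotProduct, vandermonde_apply, mul_comm (v i ^ _), neg_mul,
    sum_neg_distrib]
  linear_combination -h

theorem inv_vandermonde_mulVec_pow {K : Type*} [Field K] {P : K[X]} (hP : P.Monic)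
    (hdeg : P.natDegree = n) {v : Fin n → K} (hv : Function.Injective v)
    (hroot : ∀ i, P.IsRoot (v i)) :
    (vandermonde v)⁻¹ *ᵥ (fun i => v i ^ n) = fun j : Fin n => -P.coeff j := by
  have hdet : IsUnit (vandermonde v).det :=
    isUnit_iff_ne_zero.mpr (det_vandermonde_ne_zero_iff.mpr hv)
  rw [← vandermonde_mulVec_neg_coeff hP hdeg hroot, mulVec_mulVec, nonsing_inv_mul _ hdet,
    one_mulVec]

theorem sub_sum_pow_mul_inv_transpose_vandermonde {K : Type*} [Field K] {P : K[X]}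
    (hP : P.Monic) (hdeg : P.natDegree = n) {v : Fin n → K} (hv : Function.Injective v)
    (hroot : ∀ i, P.IsRoot (v i)) (f : ℕ → K) :
    f n - ∑ i, ∑ j : Fin n, v i ^ n * (vandermonde v)ᵀ⁻¹ i j * f j =
      ∑ j ∈ range (n + 1), P.coeff j * f j := by
  have hcol (j : Fin n) : ∑ i, v i ^ n * (vandermonde v)ᵀ⁻¹ i j = -P.coeff j := by
    rw [← congrFun (inv_vandermonde_mulVec_pow hP hdeg hv hroot) j, ← transpose_nonsing_inv,
      ← vecMul_transpose]
    rfl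
  rw [sum_comm]
  simp_rw [← sum_mul, hcol]
  rw [sum_range_succ, ← hdeg, hP.coeff_natDegree, hdeg,
    ← Fin.sum_univ_eq_sum_range (fun j => P.coeff j * f j)]
  simp only [neg_mul, sum_neg_distrib]
  ring

end CharPoly

theorem Finset.sum_range_sum_range_reflect {M : Type*} [AddCommMonoid M] (n : ℕ)
    (f : ℕ → ℕ → ℕ → M) :
    ∑ J ∈ range (n + 1), ∑ m ∈ range J, f J m (J - 1 - m) =
      ∑ j ∈ range n, ∑ k ∈ range (j + 1), f (n - (j - k)) k (n - 1 - j) := by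
  rw [sum_sigma', sum_sigma']
  refine sum_nbij' (fun p => ⟨n - p.1 + p.2, p.2⟩) (fun q => ⟨n - (q.1 - q.2), q.2⟩)
    ?_ ?_ ?_ ?_ ?_ <;> rintro ⟨J, m⟩ h <;>
    simp only [mem_sigma, mem_range, Sigma.mk.injEq, heq_eq_eq, and_true] at h ⊢ <;>
    first | omega | (congr 1 <;> omega)

theorem pseq_eq (θ : ℝ) (c : ℕ → ℂ) (k : ℕ) (z : ℂ) :
    pseq θ c k z = z ^ (2 * k) * (θ * z + 1) -
      z * ∑ m ∈ range k, c m * z ^ (2 * (k - 1 - m)) := by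
  induction k with
  | zero => simp [pseq]
  | succ k ih =>
    have hshift : ∑ m ∈ range k, c m * z ^ (2 * (k + 1 - 1 - m)) =
        z ^ 2 * ∑ m ∈ range k, c m * z ^ (2 * (k - 1 - m)) := by
      rw [mul_sum]
      refine sum_congr rfl fun m hm => ?_
      rw [show 2 * (k + 1 - 1 - m) = 2 * (k - 1 - m) + 2 by grind, pow_add]
      ring
    simp only [pseq]
    rw [ih, sum_range_succ, hshift, Nat.add_sub_cancel, Nat.sub_self]
    ring

theorem sum_coeff_mul_pseq (θ : ℝ) (c : ℕ → ℂ) {n : ℕ} {P : ℂ[X]}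
    (hdeg : P.natDegree ≤ n) (z : ℂ) :
    ∑ j ∈ range (n + 1), P.coeff j * pseq θ c j z =
      (θ * z + 1) * P.eval (z ^ 2) -
        z * ∑ j ∈ range n, (∑ k ∈ range (j + 1), P.coeff (n - (j - k)) * c k) *
          z ^ (2 * (n - 1 - j)) := by
  have hreflect := sum_range_sum_range_reflect n fun J m r => P.coeff J * c m * z ^ (2 * r)
  simp only [← sum_mul] at hreflect
  rw [eval_eq_sum_range' (Nat.lt_succ_of_le hdeg), ← hreflect, mul_sum, mul_sum,
    ← sum_sub_distrib]
  refine sum_congr rfl fun j _ => ?_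
  rw [pseq_eq, mul_sum, mul_sum, pow_mul, mul_sub, mul_sum]
  congr 1
  · ring
  · exact sum_congr rfl fun m _ => by ring

theorem stmt11_general (n : ℕ) (lam : Fin n → ℝ)
    (hinj : Function.Injective lam)
    (θ : ℝ)
    (V : Matrix (Fin n) (Fin n) ℂ) (hV : ∀ j k, V j k = (lam k : ℂ) ^ (j : ℕ))
    (c : ℕ → ℂ)
    (a : ℕ → ℂ)
    (ha : ∀ j, a j = (-1 : ℂ) ^ j *
      ∑ t ∈ Finset.powersetCard j (Finset.univ : Finset (Fin n)), ∏ i ∈ t, (lam i : ℂ)) :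
    ∀ z : ℂ,
      pseq θ c n z -
        ∑ i : Fin n, ∑ j : Fin n, (lam i : ℂ) ^ n * V⁻¹ i j * pseq θ c (j : ℕ) z =
      (θ * z + 1) * (∏ i : Fin n, (z ^ 2 - (lam i : ℂ))) -
        z * ∑ j : Fin n,
          (∑ k ∈ Finset.range ((j : ℕ) + 1), a ((j : ℕ) - k) * c k) *
            z ^ (2 * (n - 1 - (j : ℕ))) := by
  intro z
  obtain rfl : V = (vandermonde fun i => (lam i : ℂ))ᵀ := by
    ext j k; rw [hV, transpose_apply, vandermonde_apply]
  have hv : Function.Injective fun i => (lam i : ℂ) := Complex.ofReal_injective.comp hinj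
  set P : ℂ[X] := ∏ i, (X - C (lam i : ℂ))
  have hP : P.Monic := monic_prod_of_monic _ _ fun i _ => monic_X_sub_C _
  have hdeg : P.natDegree = n := natDegree_prod_X_sub_C _
  have heval (x : ℂ) : P.eval x = ∏ i, (x - lam i) := by
    simp only [P, eval_prod, eval_sub, eval_X, eval_C]
  have hroot (i : Fin n) : P.IsRoot (lam i) := by
    rw [IsRoot, heval]
    exact prod_eq_zero (mem_univ i) (sub_self _)
  have hsolve :=
    sub_sum_pow_mul_inv_transpose_vandermonde hP hdeg hv hroot fun j => pseq θ c j z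
  beta_reduce at hsolve
  rw [hsolve, sum_coeff_mul_pseq θ c hdeg.le, heval,
    Fin.sum_univ_eq_sum_range fun j => (∑ k ∈ range (j + 1), a (j - k) * c k) *
      z ^ (2 * (n - 1 - j))]
  congr 2
  refine sum_congr rfl fun j hj => congrArg (· * _) (sum_congr rfl fun k _ => ?_)
  rw [ha, prod_X_sub_C_coeff_sub _ (by grind)]

/-- Explicit form of the boundary polynomial: with `L` self-adjoint on `n`-dimensional
`𝔥` with distinct eigenvalues `λᵢ` (orthonormal eigenbasis `b`), `V` the Vandermonde
matrix of the `λᵢ`, `c k = ⟨w,L^k w⟩`, and `a_j` the signed elementary symmetric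
functions of the eigenvalues, one has
`p(z) = p_{n+1}(z) - ∑_{i,j} λᵢⁿ (V⁻¹)_{ij} p_j(z)
      = (θz+1)·∏ᵢ(z²-λᵢ) - z·∑_{j=1}^n (∑_{k=1}^j a_{j-k} c_{k-1}) z^{2(n-j)}`. -/
theorem stmt11 (n : ℕ) (𝔥 : Type*) [NormedAddCommGroup 𝔥] [InnerProductSpace ℂ 𝔥]
    [FiniteDimensional ℂ 𝔥]
    (L : Module.End ℂ 𝔥) (hL : L.IsSymmetric)
    (b : OrthonormalBasis (Fin n) ℂ 𝔥) (lam : Fin n → ℝ)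
    (hinj : Function.Injective lam)
    (heig : ∀ i, L (b i) = (lam i : ℂ) • b i)
    (w : 𝔥) (θ : ℝ)
    (V : Matrix (Fin n) (Fin n) ℂ) (hV : ∀ j k, V j k = (lam k : ℂ) ^ (j : ℕ))
    (c : ℕ → ℂ) (hc : ∀ k, c k = (inner ℂ w ((L ^ k) w) : ℂ))
    (a : ℕ → ℂ)
    (ha : ∀ j, a j = (-1 : ℂ) ^ j *
      ∑ t ∈ Finset.powersetCard j (Finset.univ : Finset (Fin n)), ∏ i ∈ t, (lam i : ℂ)) :
    ∀ z : ℂ,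
      pseq θ c n z -
        ∑ i : Fin n, ∑ j : Fin n, (lam i : ℂ) ^ n * V⁻¹ i j * pseq θ c (j : ℕ) z =
      (θ * z + 1) * (∏ i : Fin n, (z ^ 2 - (lam i : ℂ))) -
        z * ∑ j : Fin n,
          (∑ k ∈ Finset.range ((j : ℕ) + 1), a ((j : ℕ) - k) * c k) *
            z ^ (2 * (n - 1 - (j : ℕ))) :=
  stmt11_general n lam hinj θ V hV c a ha
end
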